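/- arXiv:1904.00591 — 3 statements merged into one kernel-verified Lean document; each statement's English description precedes it below -/
import Mathlib

section
/- Let X be an infinite-dimensional normed vector space over ℝ or ℂ, let r > 0, and let S = { x ∈ X : ‖x‖ = r }. If (K_n)_{n∈ℕ} is a countable family of compact subsets of S, then the union ⋃_{n∈ℕ} K_n has empty interior in the relative topology of S. In particular, every compact subset of S has empty interior in S. -/
open MeasureTheory Real Set
open scoped ENNReal ComplexConjugate

noncomputable section

abbrev Rd (d : ℕ) := EuclideanSpace ℝ (Fin d)
abbrev Ltwo (d : ℕ) := MeasureTheory.Lp ℂ 2 (volume : MeasureTheory.Measure (Rd d))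
abbrev LoneR (d : ℕ) := MeasureTheory.Lp ℝ 1 (volume : MeasureTheory.Measure (Rd d))
abbrev LoneC (d : ℕ) := MeasureTheory.Lp ℂ 1 (volume : MeasureTheory.Measure (Rd d))
abbrev timeMeasure (a b : ℝ) : MeasureTheory.Measure ℝ := volume.restrict (Set.Icc a b)

/-- `M^p([a,b])`: the dual of the Bochner space `L^{p'}([a,b], L¹(ℝ^d;ℝ))`,
where `q = p'` is the conjugate exponent of `p`. -/
abbrev Mp (d : ℕ) (q : ℝ≥0∞) [Fact (1 ≤ q)] (a b : ℝ) :=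
  StrongDual ℝ (MeasureTheory.Lp (LoneR d) q (timeMeasure a b))

/-- `U` is the free Schrödinger group `t ↦ e^{itΔ}` on `L²(ℝ^d;ℂ)`: it is characterized as
the family of unitaries acting on (L²-classes of) Schwartz functions as the Fourier multiplier
with symbol `e^{-it|ξ|²}` (in Mathlib's `2π`-convention for the Fourier transform, the symbol
reads `e^{-4π²it‖ξ‖²}`). -/
def IsSchrodingerGroup (d : ℕ) (U : ℝ → (Ltwo d ≃ₗᵢ[ℂ] Ltwo d)) : Prop :=
  ∀ (t : ℝ) (φ ψ : SchwartzMap (Rd d) ℂ),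
    (∀ ξ : Rd d, FourierTransform.fourierCLE ℂ (SchwartzMap (Rd d) ℂ) ψ ξ
        = Complex.exp (-Complex.I * (t : ℂ) * ((4 * π ^ 2 * ‖ξ‖ ^ 2 : ℝ) : ℂ))
          * FourierTransform.fourierCLE ℂ (SchwartzMap (Rd d) ℂ) φ ξ) →
    ∀ (u v : Ltwo d), (⇑u =ᵐ[volume] ⇑φ) → (⇑v =ᵐ[volume] ⇑ψ) → U t u = v

/-- `w = ∫_J f(s) V(ds)`, defined by duality:
`⟪g, w⟫ = ⟨V, s ↦ 1_J(s) · conj(g)·f(s)⟩` for every `g ∈ L²`, the (real) functional `V`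
being applied separately to the real and imaginary parts. -/
def IsDualityIntegralOn (d : ℕ) (q : ℝ≥0∞) [Fact (1 ≤ q)] (a b : ℝ)
    (V : Mp d q a b) (J : Set ℝ) (f : ℝ → Ltwo d) (w : Ltwo d) : Prop :=
  ∀ g : Ltwo d, ∃ Fre Fim : MeasureTheory.Lp (LoneR d) q (timeMeasure a b),
    (∀ᵐ s ∂(timeMeasure a b), ⇑(Fre s)
        =ᵐ[volume] fun x => J.indicator
          (fun s' => ((starRingEnd ℂ) (g x) * (f s' : Rd d → ℂ) x).re) s) ∧
    (∀ᵐ s ∂(timeMeasure a b), ⇑(Fim s)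
        =ᵐ[volume] fun x => J.indicator
          (fun s' => ((starRingEnd ℂ) (g x) * (f s' : Rd d → ℂ) x).im) s) ∧
    (inner ℂ g w : ℂ) = ((V Fre : ℝ) : ℂ) + Complex.I * ((V Fim : ℝ) : ℂ)

/-- `ψ` is a mild solution of the Schrödinger equation with potential `V ∈ M^p([a,b])`
and initial condition `ψ₀`:  `ψ(t) = e^{itΔ}ψ₀ + ∫₀ᵗ e^{i(t-s)Δ} ψ(s) V(ds)` for all `t`,
the integral being understood by duality and oriented (`∫₀ᵗ = -∫ₜ⁰` for `t < 0`). -/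
def IsMildSolution (d : ℕ) (U : ℝ → (Ltwo d ≃ₗᵢ[ℂ] Ltwo d)) (q : ℝ≥0∞) [Fact (1 ≤ q)]
    (a b : ℝ) (hab : a ≤ b) (V : Mp d q a b) (ψ₀ : Ltwo d)
    (ψ : C(Set.Icc a b, Ltwo d)) : Prop :=
  ∀ t : Set.Icc a b, ∃ w : Ltwo d,
    IsDualityIntegralOn d q a b V (Set.uIcc 0 (t : ℝ))
      (fun s => U ((t : ℝ) - s) (Set.IccExtend hab ψ s)) w ∧
    ψ t = U (t : ℝ) ψ₀ + (if (0:ℝ) ≤ (t : ℝ) then (1 : ℂ) else -1) • w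

/-- `F = L_I(f,g) V`, i.e. `F(s) = conj(g(s)) · ∫_I e^{i(s-s')Δ} f(s') V(ds')` for a.e. `s ∈ I`,
`I = [a,b]`. -/
def IsLopValue (d : ℕ) (U : ℝ → (Ltwo d ≃ₗᵢ[ℂ] Ltwo d)) (q : ℝ≥0∞) [Fact (1 ≤ q)]
    (a b : ℝ) (f g : ℝ → Ltwo d) (V : Mp d q a b)
    (F : MeasureTheory.Lp (LoneC d) q (timeMeasure a b)) : Prop :=
  ∀ᵐ s ∂(timeMeasure a b), ∃ w : Ltwo d,
    IsDualityIntegralOn d q a b V (Set.Icc a b) (fun s' => U (s - s') (f s')) w ∧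
    ⇑(F s) =ᵐ[volume]
      fun x => (starRingEnd ℂ) ((g s : Rd d → ℂ) x) * (w : Rd d → ℂ) x

/-- The squared modulus `|u|² ∈ L¹(ℝ^d;ℝ)` of `u ∈ L²(ℝ^d;ℂ)`. -/
def sqModulus (d : ℕ) (u : Ltwo d) : LoneR d :=
  MeasureTheory.MemLp.toLp _
    ((MeasureTheory.Lp.memLp u).norm_rpow (by norm_num) (by norm_num))

/-- A potential in `M^p_loc(ℝ)`: a compatible family of elements of `M^p(I)` for all compact
intervals `I = [a,b]`, i.e. the functional on a larger interval agrees with the one on a smaller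
interval when applied to (test functions vanishing outside the smaller interval). -/
structure MlocFamily (d : ℕ) (q : ℝ≥0∞) [Fact (1 ≤ q)] where
  toFun : ∀ a b : ℝ, Mp d q a b
  compat : ∀ (a b a' b' : ℝ), a' ≤ a → b ≤ b' →
    ∀ (F : MeasureTheory.Lp (LoneR d) q (timeMeasure a b))
      (F' : MeasureTheory.Lp (LoneR d) q (timeMeasure a' b')),
      (∀ᵐ s ∂(volume : MeasureTheory.Measure ℝ),
          (s ∈ Set.Icc a b → F s = F' s) ∧
          (s ∈ Set.Icc a' b' ∧ s ∉ Set.Icc a b → F' s = 0)) →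
      toFun a b F = toFun a' b' F'

/-!
A compact set `K` with nonempty interior in the sphere `S` of radius `r > 0` would make the
truncated cone `{t • y : t ∈ [0, 2], y ∈ K}` a compact neighbourhood in `X` of any interior
point of `K`: a point `z` close to it is `(‖z‖ / r) • y` with `y = (r / ‖z‖) • z` near it on `S`.
By Riesz's theorem `X` would be finite-dimensional. So compact subsets of `S` are closed with
empty interior, and since `S` is closed in the Banach space `X`, it is a Baire space, where a
countable union of such sets still has empty interior.
-/

open Metric Filter Topology

theorem interior_iUnion_eq_empty_of_isClosed {Y ι : Type*} [TopologicalSpace Y] [BaireSpace Y]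
    [Countable ι] {f : ι → Set Y} (hc : ∀ i, IsClosed (f i)) (h : ∀ i, interior (f i) = ∅) :
    interior (⋃ i, f i) = ∅ := by
  have hmeagre : IsMeagre (⋃ i, f i) :=
    isMeagre_iUnion fun i => ((hc i).isNowhereDense_iff.2 (h i)).isMeagre
  by_contra hne
  exact not_isMeagre_of_isOpen isOpen_interior (nonempty_iff_ne_empty.2 hne)
    (hmeagre.mono interior_subset)

section Sphere

variable {𝕜 X : Type*} [RCLike 𝕜] [NormedAddCommGroup X] [NormedSpace 𝕜 X] {r : ℝ}

theorem norm_ofReal_div_norm_smul (hr : 0 ≤ r) {z : X} (hz : z ≠ 0) :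
    ‖((r / ‖z‖ : ℝ) : 𝕜) • z‖ = r := by
  rw [norm_smul, RCLike.norm_ofReal, abs_of_nonneg (by positivity),
    div_mul_cancel₀ _ (norm_ne_zero_iff.2 hz)]

theorem ofReal_norm_div_smul_ofReal_div_norm_smul (hr : r ≠ 0) {z : X} (hz : z ≠ 0) :
    ((‖z‖ / r : ℝ) : 𝕜) • ((r / ‖z‖ : ℝ) : 𝕜) • z = z := by
  rw [smul_smul, ← RCLike.ofReal_mul, div_mul_div_cancel₀ hr,
    div_self (norm_ne_zero_iff.2 hz), RCLike.ofReal_one, one_smul]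

theorem continuousAt_ofReal_div_norm_smul {x : X} (hx : x ≠ 0) :
    ContinuousAt (fun z : X => ((r / ‖z‖ : ℝ) : 𝕜) • z) x :=
  (RCLike.continuous_ofReal.continuousAt.comp
    (continuousAt_const.div continuous_norm.continuousAt (norm_ne_zero_iff.2 hx))).smul
    continuousAt_id

theorem FiniteDimensional.of_isCompact_sphere_of_interior_nonempty (hr : 0 < r)
    {K : Set (sphere (0 : X) r)} (hK : IsCompact K) (hint : (interior K).Nonempty) :
    FiniteDimensional 𝕜 X := by
  obtain ⟨x, hx⟩ := hint
  obtain ⟨u, hu, huK⟩ := mem_nhds_subtype _ _ _ |>.1 (mem_interior_iff_mem_nhds.1 hx)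
  have hx0 : (x : X) ≠ 0 := ne_zero_of_mem_sphere hr.ne' x
  have hxr : ‖(x : X)‖ = r := norm_eq_of_mem_sphere x
  set C : Set X := (fun p : ℝ × sphere (0 : X) r => (p.1 : 𝕜) • (p.2 : X)) '' (Icc 0 2 ×ˢ K)
  have hC : IsCompact C := (isCompact_Icc.prod hK).image (by fun_prop)
  have hproj : Tendsto (fun z : X => ((r / ‖z‖ : ℝ) : 𝕜) • z) (𝓝 (x : X)) (𝓝 (x : X)) := by
    have := (continuousAt_ofReal_div_norm_smul (𝕜 := 𝕜) (r := r) hx0).tendsto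
    rwa [hxr, div_self hr.ne', RCLike.ofReal_one, one_smul] at this
  have hnorm : ∀ᶠ z in 𝓝 (x : X), ‖z‖ < 2 * r :=
    continuous_norm.continuousAt.eventually_lt continuousAt_const (by linarith)
  have hCx : C ∈ 𝓝 (x : X) := by
    filter_upwards [hproj hu, hnorm, isOpen_ne.mem_nhds hx0] with z hzu hz2 hz0
    have hyS : ((r / ‖z‖ : ℝ) : 𝕜) • z ∈ sphere (0 : X) r :=
      mem_sphere_zero_iff_norm.2 (norm_ofReal_div_norm_smul hr.le hz0)
    refine ⟨(‖z‖ / r, ⟨_, hyS⟩), ⟨⟨by positivity, ?_⟩, huK hzu⟩,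
      ofReal_norm_div_smul_ofReal_div_norm_smul hr.ne' hz0⟩
    rw [div_le_iff₀ hr]
    linarith
  have : LocallyCompactSpace X := hC.locallyCompactSpace_of_mem_nhds_of_addGroup hCx
  exact FiniteDimensional.of_locallyCompactSpace 𝕜

theorem interior_eq_empty_of_isCompact_sphere (hinf : ¬FiniteDimensional 𝕜 X) (hr : 0 < r)
    {K : Set (sphere (0 : X) r)} (hK : IsCompact K) : interior K = ∅ :=
  not_nonempty_iff_eq_empty.1 fun hint =>
    hinf (.of_isCompact_sphere_of_interior_nonempty hr hK hint)

end Sphere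

/-- In an infinite-dimensional Banach space `X` (over `ℝ` or `ℂ`), any
countable union of compact subsets of the sphere `S = {x : ‖x‖ = r}` (`r > 0`) has empty
interior in the relative topology of `S`; in particular, every compact subset of `S` has
empty interior in `S`. -/
theorem statement12 (𝕜 : Type*) [RCLike 𝕜] (X : Type*) [NormedAddCommGroup X]
    [NormedSpace 𝕜 X] [CompleteSpace X] (hinf : ¬FiniteDimensional 𝕜 X)
    (r : ℝ) (hr : 0 < r)
    (K : ℕ → Set ↥(Metric.sphere (0 : X) r)) (hK : ∀ n, IsCompact (K n)) :
    interior (⋃ n, K n) = ∅ ∧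
    ∀ K' : Set ↥(Metric.sphere (0 : X) r), IsCompact K' → interior K' = ∅ := by
  have : CompleteSpace (sphere (0 : X) r) := isClosed_sphere.completeSpace_coe
  have hcompact : ∀ K' : Set (sphere (0 : X) r), IsCompact K' → interior K' = ∅ :=
    fun _ => interior_eq_empty_of_isCompact_sphere hinf hr
  exact ⟨interior_iUnion_eq_empty_of_isClosed (fun n => (hK n).isClosed)
    (fun n => hcompact _ (hK n)), hcompact⟩

end
end

section
/- Let d ≥ 1, 1 < p ≤ ∞, T > 0, and f, g ∈ L^∞([0,T], L²(ℝ^d;ℂ)). For 0 ≤ t ≤ T write L_t := L_{[0,t]}(f,g), where elements of L^{p'}([0,t']) are extended by zero to [0,t] for t' ≤ t and W ∈ M^p([0,T]) is restricted to subintervals accordingly. Then there is a constant C, depending only on p, such that for all W ∈ M^p([0,T]) and all 0 ≤ t' ≤ t ≤ T: |⟨W, L_t W⟩ − ⟨W, L_{t'} W⟩| ≤ C (t − t')^{1−1/p} ‖f‖_{L^∞L²} ‖g‖_{L^∞L²} ‖W‖²_{M^p([0,T])} · max(1, T)^{2−2/p}. In particular, t ↦ ⟨W, L_t W⟩ is (1−1/p)-Hölder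 continuous on [0,T], uniformly for ‖W‖_{M^p} bounded. -/
open MeasureTheory Real Set
open scoped ENNReal ComplexConjugate

noncomputable section

/-- `c = ⟨W, L_t W⟩`, where `L_t = L_{[0,t]}(f,g)`: the quadratic pairing of
`W ∈ M^p([0,T])` (restricted to `[0,t]`) with `L_{[0,t]}(f,g)W`, namely
`c = W(Re F) + i W(Im F)` where `F(s) = 1_{[0,t]}(s) conj(g(s)) ∫_{[0,t]} e^{i(s-s')Δ} f(s') W(ds')`. -/
def IsLPairingValue (d : ℕ) (U : ℝ → (Ltwo d ≃ₗᵢ[ℂ] Ltwo d)) (q : ℝ≥0∞) [Fact (1 ≤ q)]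
    (T : ℝ) (f g : ℝ → Ltwo d) (W : Mp d q 0 T) (t : ℝ) (c : ℂ) : Prop :=
  ∃ Fre Fim : MeasureTheory.Lp (LoneR d) q (timeMeasure 0 T),
    (∀ᵐ s ∂(timeMeasure 0 T), ∃ w : Ltwo d,
      IsDualityIntegralOn d q 0 T W (Set.Icc 0 t) (fun s' => U (s - s') (f s')) w ∧
      ⇑(Fre s) =ᵐ[volume] (fun x => (Set.Icc (0:ℝ) t).indicator
          (fun _ => ((starRingEnd ℂ) ((g s : Rd d → ℂ) x) * (w : Rd d → ℂ) x).re) s) ∧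
      ⇑(Fim s) =ᵐ[volume] (fun x => (Set.Icc (0:ℝ) t).indicator
          (fun _ => ((starRingEnd ℂ) ((g s : Rd d → ℂ) x) * (w : Rd d → ℂ) x).im) s)) ∧
    c = ((W Fre : ℝ) : ℂ) + Complex.I * ((W Fim : ℝ) : ℂ)


/-! Write `w_t(s) = ∫_{[0,t]} e^{i(s-s')Δ} f(s') W(ds')`. Testing the duality that defines
`w_t(s) - w_{t'}(s)` against `w_t(s) - w_{t'}(s)` itself, and using that `e^{iτΔ}` is unitary,
gives `‖w_t(s) - w_{t'}(s)‖ ≤ ‖W‖ ‖f‖ (t - t')^{1/p'}`; likewise `‖w_t(s)‖ ≤ ‖W‖ ‖f‖ T^{1/p'}`.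
By Cauchy–Schwarz in `x`, the difference of the integrands `conj(g(s)) w_t(s) 1_{[0,t]}(s)` of
`⟨W, L_t W⟩` and `⟨W, L_{t'} W⟩` thus has `L¹` norm at most `‖g‖ ‖W‖ ‖f‖ (t - t')^{1/p'}` on
`[0,t']` and `‖g‖ ‖W‖ ‖f‖ T^{1/p'}` on `(t',t]`, hence `L^{p'}` norm at most
`2 ‖f‖ ‖g‖ ‖W‖ ((t - t') T)^{1/p'}`. Pairing the real and imaginary parts with `W` gives the
estimate with `C = 4`, since `1/p' = 1 - 1/p` and `T^{1/p'} ≤ max(1,T)^{2/p'}`. -/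

theorem ENNReal.one_sub_one_div_toReal_eq {p q : ℝ≥0∞} (hpq : 1 / p + 1 / q = 1) :
    1 - 1 / p.toReal = 1 / q.toReal := by
  have hp : 1 / p ≠ ∞ := ne_top_of_le_ne_top one_ne_top (le_self_add.trans_eq hpq)
  have hq : 1 / q ≠ ∞ := ne_top_of_le_ne_top one_ne_top (le_add_self.trans_eq hpq)
  have := congrArg ENNReal.toReal hpq
  rw [ENNReal.toReal_add hp hq] at this
  simp only [one_div, ENNReal.toReal_inv, ENNReal.toReal_one] at this ⊢
  linarith

namespace MeasureTheory.Lp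

variable {α : Type*} [MeasurableSpace α] {μ : Measure α}

theorem ae_norm_le_norm_top {E : Type*} [NormedAddCommGroup E] (f : Lp E ∞ μ) :
    ∀ᵐ x ∂μ, ‖f x‖ ≤ ‖f‖ := by
  have hfin : eLpNormEssSup f μ ≠ ∞ := by simpa using eLpNorm_ne_top f
  filter_upwards [ae_le_eLpNormEssSup (f := ⇑f) (μ := μ)] with x hx
  rw [norm_def, eLpNorm_exponent_top, ← toReal_enorm]
  exact ENNReal.toReal_mono hfin hx

theorem norm_le_of_ae_norm_le_indicator_add_indicator {E : Type*} [NormedAddCommGroup E]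
    [IsFiniteMeasure μ] {q : ℝ≥0∞} [Fact (1 ≤ q)] {F : Lp E q μ} {A B : Set α}
    (hA : MeasurableSet A) (hB : MeasurableSet B) {a b : ℝ} (ha : 0 ≤ a) (hb : 0 ≤ b)
    (h : ∀ᵐ x ∂μ, ‖F x‖ ≤ A.indicator (fun _ => a) x + B.indicator (fun _ => b) x) :
    ‖F‖ ≤ a * (μ A).toReal ^ (1 / q.toReal) + b * (μ B).toReal ^ (1 / q.toReal) := by
  have hsplit : eLpNorm F q μ ≤ ENNReal.ofReal a * μ A ^ (1 / q.toReal)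
      + ENNReal.ofReal b * μ B ^ (1 / q.toReal) := by
    refine (eLpNorm_mono_ae_real h).trans ((eLpNorm_add_le
      (measurable_const.indicator hA).aestronglyMeasurable
      (measurable_const.indicator hB).aestronglyMeasurable Fact.out).trans ?_)
    rw [← Real.enorm_of_nonneg ha, ← Real.enorm_of_nonneg hb]
    exact add_le_add (eLpNorm_indicator_const_le _ _) (eLpNorm_indicator_const_le _ _)
  rw [norm_def]
  refine ENNReal.toReal_le_of_le_ofReal (by positivity) (hsplit.trans_eq ?_)
  rw [ENNReal.ofReal_add (by positivity) (by positivity), ENNReal.ofReal_mul ha,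
    ENNReal.ofReal_mul hb, ← ENNReal.ofReal_rpow_of_nonneg ENNReal.toReal_nonneg (by positivity),
    ← ENNReal.ofReal_rpow_of_nonneg ENNReal.toReal_nonneg (by positivity),
    ENNReal.ofReal_toReal (measure_ne_top μ A), ENNReal.ofReal_toReal (measure_ne_top μ B)]

theorem norm_le_norm_mul_norm_of_ae_eq_conj_mul (σ : ℂ →+ ℝ) (hσ : ∀ z, |σ z| ≤ ‖z‖)
    {F : Lp ℝ 1 μ} {u v : Lp ℂ 2 μ} (hF : ⇑F =ᵐ[μ] fun x => σ (conj (u x) * v x)) :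
    ‖F‖ ≤ ‖u‖ * ‖v‖ := by
  have hHolder : eLpNorm (fun x => σ (conj (u x) * v x)) 1 μ ≤ eLpNorm u 2 μ * eLpNorm v 2 μ := by
    simpa using eLpNorm_le_eLpNorm_mul_eLpNorm'_of_norm (Lp.aestronglyMeasurable u)
      (Lp.aestronglyMeasurable v) (fun z w => σ (conj z * w)) 1
      (ae_of_all _ fun x => by simpa [Real.norm_eq_abs] using hσ (conj (u x) * v x))
  rw [norm_def, norm_def, norm_def, eLpNorm_congr_ae hF, ← ENNReal.toReal_mul]
  exact ENNReal.toReal_mono (by finiteness [eLpNorm_ne_top u, eLpNorm_ne_top v]) hHolder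

theorem norm_sub_le_indicator_of_ae_eq_indicator {β : Type*} (σ : ℂ →+ ℝ)
    (hσ : ∀ z, |σ z| ≤ ‖z‖) {u v v' : Lp ℂ 2 μ} {X X' : Lp ℝ 1 μ} {J J' : Set β} (hJ : J' ⊆ J)
    (s : β) (hX : ⇑X =ᵐ[μ] fun x => J.indicator (fun _ => σ (conj (u x) * v x)) s)
    (hX' : ⇑X' =ᵐ[μ] fun x => J'.indicator (fun _ => σ (conj (u x) * v' x)) s) :
    ‖X - X'‖ ≤
      J'.indicator (fun _ => ‖u‖ * ‖v - v'‖) s + (J \ J').indicator (fun _ => ‖u‖ * ‖v‖) s := by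
  by_cases hsJ' : s ∈ J'
  · rw [indicator_of_mem hsJ', indicator_of_notMem (fun h => h.2 hsJ'), add_zero]
    refine norm_le_norm_mul_norm_of_ae_eq_conj_mul σ hσ ?_
    filter_upwards [coeFn_sub X X', coeFn_sub v v', hX, hX'] with x hXX' hvv' hXx hX'x
    rw [hXX', Pi.sub_apply, hXx, hX'x, indicator_of_mem (hJ hsJ'), indicator_of_mem hsJ',
      hvv', Pi.sub_apply, mul_sub, map_sub]
  by_cases hsJ : s ∈ J
  · rw [indicator_of_notMem hsJ', indicator_of_mem (mem_sdiff_of_mem hsJ hsJ'), zero_add]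
    refine norm_le_norm_mul_norm_of_ae_eq_conj_mul σ hσ ?_
    filter_upwards [coeFn_sub X X', hX, hX'] with x hXX' hXx hX'x
    rw [hXX', Pi.sub_apply, hXx, hX'x, indicator_of_mem hsJ, indicator_of_notMem hsJ', sub_zero]
  · have hzero : X - X' = 0 := by
      rw [eq_zero_iff_ae_eq_zero]
      filter_upwards [coeFn_sub X X', hX, hX'] with x hXX' hXx hX'x
      rw [hXX', Pi.sub_apply, hXx, hX'x, indicator_of_notMem hsJ, indicator_of_notMem hsJ',
        sub_zero, Pi.zero_apply]
    rw [hzero, norm_zero]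
    exact add_nonneg (indicator_nonneg (fun _ _ => by positivity) s)
      (indicator_nonneg (fun _ _ => by positivity) s)

end MeasureTheory.Lp

theorem timeMeasure_toReal_le {a b : ℝ} (hab : a ≤ b) (S : Set ℝ) :
    (timeMeasure a b S).toReal ≤ b - a := by
  refine ENNReal.toReal_le_of_le_ofReal (sub_nonneg.2 hab) ?_
  calc timeMeasure a b S ≤ timeMeasure a b univ := measure_mono (subset_univ S)
    _ = ENNReal.ofReal (b - a) := by simp

theorem timeMeasure_Icc_diff_Icc_toReal_le (a b : ℝ) {t t' : ℝ} (htt' : t' ≤ t) :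
    (timeMeasure a b (Icc a t \ Icc a t')).toReal ≤ t - t' := by
  refine ENNReal.toReal_le_of_le_ofReal (sub_nonneg.2 htt') ?_
  calc timeMeasure a b (Icc a t \ Icc a t') ≤ volume (Icc a t \ Icc a t') :=
        Measure.restrict_apply_le _ _
    _ ≤ volume (Ioc t' t) :=
        measure_mono fun s hs => ⟨lt_of_not_ge fun h => hs.2 ⟨hs.1.1, h⟩, hs.1.2⟩
    _ = ENNReal.ofReal (t - t') := Real.volume_Ioc

section PairingEstimates

variable {d : ℕ}

theorem isDualityIntegralOn_empty {q : ℝ≥0∞} [Fact (1 ≤ q)] {a b : ℝ} (V : Mp d q a b)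
    (h : ℝ → Ltwo d) : IsDualityIntegralOn d q a b V ∅ h 0 := by
  intro g
  refine ⟨0, 0, ?_, ?_, by simp⟩ <;>
  · filter_upwards [Lp.coeFn_zero (LoneR d) q (timeMeasure a b)] with s hs
    rw [hs]
    exact ae_of_all _ fun x => by simp

theorem IsDualityIntegralOn.norm_sub_le {q : ℝ≥0∞} [Fact (1 ≤ q)] {a b : ℝ} {V : Mp d q a b}
    {J J' : Set ℝ} (hJ : J' ⊆ J) (hJm : MeasurableSet J) (hJ'm : MeasurableSet J')
    {h : ℝ → Ltwo d} {M : ℝ} (hM : 0 ≤ M) (hh : ∀ᵐ s ∂(timeMeasure a b), ‖h s‖ ≤ M)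
    {w w' : Ltwo d} (hw : IsDualityIntegralOn d q a b V J h w)
    (hw' : IsDualityIntegralOn d q a b V J' h w') :
    ‖w - w'‖ ≤ ‖V‖ * M * (timeMeasure a b (J \ J')).toReal ^ (1 / q.toReal) := by
  set g := w - w'
  set m := (timeMeasure a b (J \ J')).toReal ^ (1 / q.toReal)
  obtain ⟨Are, _, hAre, -, hAinner⟩ := hw g
  obtain ⟨Bre, _, hBre, -, hBinner⟩ := hw' g
  have hsq : ‖g‖ ^ 2 = V (Are - Bre) := by
    have := congrArg Complex.re (inner_sub_right (𝕜 := ℂ) g w w')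
    rw [inner_self_eq_norm_sq_to_K, hAinner, hBinner] at this
    simpa [map_sub, ← Complex.ofReal_pow] using this
  have hdiff : ‖Are - Bre‖ ≤ ‖g‖ * M * m := by
    have hae : ∀ᵐ s ∂(timeMeasure a b), ‖(Are - Bre) s‖ ≤
        J'.indicator (fun _ => 0) s + (J \ J').indicator (fun _ => ‖g‖ * M) s := by
      filter_upwards [Lp.coeFn_sub Are Bre, hAre, hBre, hh] with s hs hAs hBs hhs
      rw [hs, Pi.sub_apply]
      refine (Lp.norm_sub_le_indicator_of_ae_eq_indicator Complex.reAddGroupHom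
        Complex.abs_re_le_norm hJ s hAs hBs).trans ?_
      rw [sub_self, norm_zero, mul_zero]
      gcongr
    simpa only [zero_mul, zero_add] using
      Lp.norm_le_of_ae_norm_le_indicator_add_indicator hJ'm (hJm.diff hJ'm) le_rfl
        (by positivity) hae
  have hsq_le : ‖g‖ ^ 2 ≤ ‖g‖ * (‖V‖ * M * m) :=
    calc ‖g‖ ^ 2 ≤ ‖V‖ * ‖Are - Bre‖ := hsq ▸ (le_abs_self _).trans (V.le_opNorm _)
      _ ≤ ‖V‖ * (‖g‖ * M * m) := by grw [hdiff]
      _ = ‖g‖ * (‖V‖ * M * m) := by ring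
  rcases (norm_nonneg g).eq_or_lt with hg | hg
  · rw [← hg]
    positivity
  · nlinarith

/-- `F` is the `σ`-part (real or imaginary) of the integrand
`s ↦ 1_{[0,t]}(s) conj(g(s)) ∫_{[0,t]} e^{i(s-s')Δ} f(s') W(ds')` of `IsLPairingValue`. -/
def IsPairingComponent (σ : ℂ →+ ℝ) (U : ℝ → (Ltwo d ≃ₗᵢ[ℂ] Ltwo d)) {q : ℝ≥0∞} [Fact (1 ≤ q)]
    {T : ℝ} (f g : ℝ → Ltwo d) (W : Mp d q 0 T) (t : ℝ)
    (F : Lp (LoneR d) q (timeMeasure 0 T)) : Prop :=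
  ∀ᵐ s ∂(timeMeasure 0 T), ∃ w : Ltwo d,
    IsDualityIntegralOn d q 0 T W (Icc 0 t) (fun s' => U (s - s') (f s')) w ∧
    ⇑(F s) =ᵐ[volume] fun x => (Icc (0:ℝ) t).indicator (fun _ => σ (conj (g s x) * w x)) s

theorem IsPairingComponent.norm_sub_le (σ : ℂ →+ ℝ) (hσ : ∀ z, |σ z| ≤ ‖z‖)
    {U : ℝ → (Ltwo d ≃ₗᵢ[ℂ] Ltwo d)} {q : ℝ≥0∞} [Fact (1 ≤ q)] {T t t' : ℝ}
    (ht' : 0 ≤ t') (htt' : t' ≤ t) (htT : t ≤ T) {f g : Lp (Ltwo d) ∞ (timeMeasure 0 T)}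
    {W : Mp d q 0 T} {F F' : Lp (LoneR d) q (timeMeasure 0 T)}
    (hF : IsPairingComponent σ U f g W t F) (hF' : IsPairingComponent σ U f g W t' F') :
    ‖F - F'‖ ≤ 2 * ‖g‖ * ‖W‖ * ‖f‖ * (t - t') ^ (1 / q.toReal) * T ^ (1 / q.toReal) := by
  have hT : 0 ≤ T := ht'.trans (htt'.trans htT)
  have htt'0 : 0 ≤ t - t' := sub_nonneg.2 htt'
  have hμT (S : Set ℝ) : (timeMeasure 0 T S).toReal ≤ T :=
    (timeMeasure_toReal_le hT S).trans_eq (sub_zero T)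
  have hIcc : Icc (0:ℝ) t' ⊆ Icc 0 t := Icc_subset_Icc le_rfl htt'
  have hUf : ∀ s, ∀ᵐ s' ∂(timeMeasure 0 T), ‖U (s - s') (f s')‖ ≤ ‖f‖ := fun s => by
    filter_upwards [Lp.ae_norm_le_norm_top f] with s' hs'
    rwa [LinearIsometryEquiv.norm_map]
  have hae : ∀ᵐ s ∂(timeMeasure 0 T), ‖(F - F') s‖ ≤
      (Icc 0 t').indicator (fun _ => ‖g‖ * (‖W‖ * ‖f‖ * (t - t') ^ (1 / q.toReal))) s +
      (Icc 0 t \ Icc 0 t').indicator (fun _ => ‖g‖ * (‖W‖ * ‖f‖ * T ^ (1 / q.toReal))) s := by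
    filter_upwards [hF, hF', Lp.coeFn_sub F F', Lp.ae_norm_le_norm_top g]
      with s ⟨w, hw, hFs⟩ ⟨w', hw', hF's⟩ hsub hgs
    have hww' : ‖w - w'‖ ≤ ‖W‖ * ‖f‖ * (t - t') ^ (1 / q.toReal) := by
      grw [hw.norm_sub_le hIcc measurableSet_Icc measurableSet_Icc (norm_nonneg f) (hUf s) hw',
        timeMeasure_Icc_diff_Icc_toReal_le 0 T htt']
    have hw0 : ‖w‖ ≤ ‖W‖ * ‖f‖ * T ^ (1 / q.toReal) := by
      have := hw.norm_sub_le (empty_subset _) measurableSet_Icc MeasurableSet.empty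
        (norm_nonneg f) (hUf s) (isDualityIntegralOn_empty W _)
      rw [sub_zero, sdiff_empty] at this
      grw [this, hμT]
    rw [hsub, Pi.sub_apply]
    refine (Lp.norm_sub_le_indicator_of_ae_eq_indicator σ hσ hIcc s hFs hF's).trans ?_
    gcongr
  grw [Lp.norm_le_of_ae_norm_le_indicator_add_indicator measurableSet_Icc
    (measurableSet_Icc.diff measurableSet_Icc) (by positivity) (by positivity) hae,
    hμT, timeMeasure_Icc_diff_Icc_toReal_le 0 T htt']
  exact le_of_eq (by ring)

theorem IsLPairingValue.exists_components {U : ℝ → (Ltwo d ≃ₗᵢ[ℂ] Ltwo d)} {q : ℝ≥0∞}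
    [Fact (1 ≤ q)] {T t : ℝ} {f g : ℝ → Ltwo d} {W : Mp d q 0 T} {c : ℂ}
    (hc : IsLPairingValue d U q T f g W t c) :
    ∃ Fre Fim, IsPairingComponent Complex.reAddGroupHom U f g W t Fre ∧
      IsPairingComponent Complex.imAddGroupHom U f g W t Fim ∧
      c = W Fre + Complex.I * W Fim := by
  obtain ⟨Fre, Fim, hF, rfl⟩ := hc
  refine ⟨Fre, Fim, hF.mono fun s hs => ?_, hF.mono fun s hs => ?_, rfl⟩
  · obtain ⟨w, hw, hw_re, -⟩ := hs
    exact ⟨w, hw, hw_re⟩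
  · obtain ⟨w, hw, -, hw_im⟩ := hs
    exact ⟨w, hw, hw_im⟩

theorem IsLPairingValue.norm_sub_le {U : ℝ → (Ltwo d ≃ₗᵢ[ℂ] Ltwo d)} {q : ℝ≥0∞} [Fact (1 ≤ q)]
    {T t t' : ℝ} (ht' : 0 ≤ t') (htt' : t' ≤ t) (htT : t ≤ T)
    {f g : Lp (Ltwo d) ∞ (timeMeasure 0 T)} {W : Mp d q 0 T} {c c' : ℂ}
    (hc : IsLPairingValue d U q T f g W t c) (hc' : IsLPairingValue d U q T f g W t' c') :
    ‖c - c'‖ ≤ 4 * (t - t') ^ (1 / q.toReal) * ‖f‖ * ‖g‖ * ‖W‖ ^ 2 * T ^ (1 / q.toReal) := by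
  obtain ⟨Fre, Fim, hFre, hFim, rfl⟩ := hc.exists_components
  obtain ⟨Fre', Fim', hFre', hFim', rfl⟩ := hc'.exists_components
  have hre := hFre.norm_sub_le _ Complex.abs_re_le_norm ht' htt' htT hFre'
  have him := hFim.norm_sub_le _ Complex.abs_im_le_norm ht' htt' htT hFim'
  have hW (F F' : Lp (LoneR d) q (timeMeasure 0 T)) : |W F - W F'| ≤ ‖W‖ * ‖F - F'‖ := by
    rw [← map_sub, ← Real.norm_eq_abs]
    exact W.le_opNorm _
  calc ‖(W Fre + Complex.I * W Fim : ℂ) - (W Fre' + Complex.I * W Fim')‖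
      ≤ |W Fre - W Fre'| + |W Fim - W Fim'| := by
        simpa using Complex.norm_le_abs_re_add_abs_im (W Fre + Complex.I * W Fim -
          (W Fre' + Complex.I * W Fim'))
    _ ≤ ‖W‖ * ‖Fre - Fre'‖ + ‖W‖ * ‖Fim - Fim'‖ := add_le_add (hW _ _) (hW _ _)
    _ ≤ ‖W‖ * (2 * ‖g‖ * ‖W‖ * ‖f‖ * (t - t') ^ (1 / q.toReal) * T ^ (1 / q.toReal))
        + ‖W‖ * (2 * ‖g‖ * ‖W‖ * ‖f‖ * (t - t') ^ (1 / q.toReal) * T ^ (1 / q.toReal)) := by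
      grw [hre, him]
    _ = _ := by ring

theorem statement15_general (p q : ℝ≥0∞) (hpq : 1 / p + 1 / q = 1) [Fact (1 ≤ q)] :
    ∃ C : ℝ, ∀ (d : ℕ), 1 ≤ d →
      ∀ (U : ℝ → (Ltwo d ≃ₗᵢ[ℂ] Ltwo d)), IsSchrodingerGroup d U →
      ∀ (T : ℝ), 0 < T →
      ∀ (f g : MeasureTheory.Lp (Ltwo d) ∞ (timeMeasure 0 T)) (W : Mp d q 0 T)
        (t t' : ℝ) (c c' : ℂ), 0 ≤ t' → t' ≤ t → t ≤ T →
        IsLPairingValue d U q T (⇑f) (⇑g) W t c →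
        IsLPairingValue d U q T (⇑f) (⇑g) W t' c' →
        ‖c - c'‖ ≤ C * (t - t') ^ (1 - 1 / p.toReal) * ‖f‖ * ‖g‖ * ‖W‖ ^ 2 *
          max 1 T ^ (2 - 2 / p.toReal) := by
  refine ⟨4, fun d _ U _ T hT f g W t t' c c' ht' htt' htT hc hc' => ?_⟩
  have he := ENNReal.one_sub_one_div_toReal_eq hpq
  set e := 1 / q.toReal
  have he0 : 0 ≤ e := by positivity
  rw [he, show 2 - 2 / p.toReal = 2 * e by rw [← he]; ring]
  have hTmax : T ^ e ≤ max 1 T ^ (2 * e) :=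
    calc T ^ e ≤ max 1 T ^ e := by gcongr; exact le_max_right 1 T
      _ ≤ max 1 T ^ (2 * e) := Real.rpow_le_rpow_of_exponent_le (le_max_left 1 T) (by linarith)
  have htt'0 : 0 ≤ t - t' := sub_nonneg.2 htt'
  grw [hc.norm_sub_le ht' htt' htT hc', hTmax]

/-- Uniform Hölder continuity in `t` of the quadratic pairing
`t ↦ ⟨W, L_t W⟩`, `L_t = L_{[0,t]}(f,g)`: there is `C = C(p)` with
`|⟨W,L_t W⟩ - ⟨W,L_{t'} W⟩| ≤ C (t-t')^{1-1/p} ‖f‖_{L^∞L²} ‖g‖_{L^∞L²} ‖W‖² max(1,T)^{2-2/p}`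
for all `0 ≤ t' ≤ t ≤ T`. -/
theorem statement15 (p q : ℝ≥0∞) (hp : 1 < p) (hpq : 1 / p + 1 / q = 1) [Fact (1 ≤ q)] :
    ∃ C : ℝ, ∀ (d : ℕ), 1 ≤ d →
      ∀ (U : ℝ → (Ltwo d ≃ₗᵢ[ℂ] Ltwo d)), IsSchrodingerGroup d U →
      ∀ (T : ℝ), 0 < T →
      ∀ (f g : MeasureTheory.Lp (Ltwo d) ∞ (timeMeasure 0 T)) (W : Mp d q 0 T)
        (t t' : ℝ) (c c' : ℂ), 0 ≤ t' → t' ≤ t → t ≤ T →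
        IsLPairingValue d U q T (⇑f) (⇑g) W t c →
        IsLPairingValue d U q T (⇑f) (⇑g) W t' c' →
        ‖c - c'‖ ≤ C * (t - t') ^ (1 - 1 / p.toReal) * ‖f‖ * ‖g‖ * ‖W‖ ^ 2 *
          max 1 T ^ (2 - 2 / p.toReal) :=
  statement15_general p q hpq
end PairingEstimates
end
end

section
/- Let d ≥ 1, 1 ≤ p ≤ ∞, I ⊂ ℝ a compact interval, r ≥ 0, f ∈ L^∞(I, L²(ℝ^d;ℂ)), and g ∈ L^∞(I, L²(ℝ^d;ℂ)) such that for some s ∈ I the function x ↦ |x|^r g(s,x) belongs to L²(ℝ^d). Then for every V ∈ M^p(I): ‖ |x|^r (L_I(f,g)V)(s, ·) ‖_{L¹(ℝ^d)} ≤ |I|^{1−1/p} ‖ |x|^r g(s) ‖_{L²} ‖f‖_{L^∞(I,L²)} ‖V‖_{M^p(I)}, where |I| denotes the length of I; i.e. at each time s the output of L_I(f,g) inherits the spatial moment bounds of g(s). -/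
open MeasureTheory Real Set
open scoped ENNReal ComplexConjugate

noncomputable section

/-! By Cauchy–Schwarz in `x` it suffices to bound `‖w‖` for `w = ∫_I e^{i(s-s')Δ} f(s') V(ds')`.
Testing the duality relation defining `w` against `w` itself gives `‖w‖² = V(F)` with
`F(s') = Re(conj w · e^{i(s-s')Δ} f(s'))`. By Cauchy–Schwarz and unitarity `‖F(s')‖_{L¹} ≤ ‖w‖ ‖f‖_∞`,
so `‖F‖_{L^{p'}(I, L¹)} ≤ |I|^{1/p'} ‖w‖ ‖f‖_∞`, and dividing by `‖w‖` gives
`‖w‖ ≤ |I|^{1-1/p} ‖f‖_∞ ‖V‖`. -/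

lemma ENNReal.toReal_inv_add_toReal_inv {p q : ℝ≥0∞} (h : p⁻¹ + q⁻¹ = 1) :
    p.toReal⁻¹ + q.toReal⁻¹ = 1 := by
  have hp : p⁻¹ ≠ ∞ := ne_top_of_le_ne_top ENNReal.one_ne_top (h ▸ le_self_add)
  have hq : q⁻¹ ≠ ∞ := ne_top_of_le_ne_top ENNReal.one_ne_top (h ▸ le_add_self)
  simpa [ENNReal.toReal_add hp hq] using congrArg ENNReal.toReal h

namespace MeasureTheory

variable {α : Type*} [MeasurableSpace α] {μ : Measure α}

lemma Lp.ae_norm_le_norm_of_top {E : Type*} [NormedAddCommGroup E] (f : Lp E ∞ μ) :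
    ∀ᵐ x ∂μ, ‖f x‖ ≤ ‖f‖ := by
  filter_upwards [ae_le_eLpNormEssSup (f := ⇑f)] with x hx
  rwa [← enorm_le_iff_norm_le, Lp.enorm_def, eLpNorm_exponent_top]

variable {𝕜 : Type*} [RCLike 𝕜]

lemma eLpNorm_one_conj_mul_le {φ ψ : α → 𝕜} (hφ : AEStronglyMeasurable φ μ)
    (hψ : AEStronglyMeasurable ψ μ) :
    eLpNorm (fun x => conj (φ x) * ψ x) 1 μ ≤ eLpNorm φ 2 μ * eLpNorm ψ 2 μ := by
  refine (eLpNorm_le_eLpNorm_mul_eLpNorm'_of_norm (p := 2) (q := 2) hφ hψ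
    (fun u v => conj u * v) 1 (Filter.Eventually.of_forall fun x => ?_)).trans_eq (by simp)
  rw [norm_mul, RCLike.norm_conj, NNReal.coe_one, one_mul]

lemma eLpNorm_one_re_conj_mul_le {φ ψ : α → 𝕜} (hφ : AEStronglyMeasurable φ μ)
    (hψ : AEStronglyMeasurable ψ μ) :
    eLpNorm (fun x => RCLike.re (conj (φ x) * ψ x)) 1 μ ≤ eLpNorm φ 2 μ * eLpNorm ψ 2 μ :=
  (eLpNorm_mono (f := fun x => RCLike.re (conj (φ x) * ψ x)) (g := fun x => conj (φ x) * ψ x)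
    fun _ => RCLike.norm_re_le_norm _).trans (eLpNorm_one_conj_mul_le hφ hψ)

lemma Lp.norm_le_of_ae_eq_re_conj_mul {u v : Lp 𝕜 2 μ} {F : Lp ℝ 1 μ}
    (hF : ⇑F =ᵐ[μ] fun x => RCLike.re (conj (u x) * v x)) : ‖F‖ ≤ ‖u‖ * ‖v‖ := by
  rw [Lp.norm_def, eLpNorm_congr_ae hF]
  refine ENNReal.toReal_le_of_le_ofReal (by positivity) ?_
  rw [ENNReal.ofReal_mul (norm_nonneg _), ofReal_norm, ofReal_norm, Lp.enorm_def, Lp.enorm_def]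
  exact eLpNorm_one_re_conj_mul_le (Lp.aestronglyMeasurable u) (Lp.aestronglyMeasurable v)

end MeasureTheory

lemma IsDualityIntegralOn.norm_le {d : ℕ} {q : ℝ≥0∞} [Fact (1 ≤ q)] {a b : ℝ} (hab : a ≤ b)
    {V : Mp d q a b} {J : Set ℝ} {F : ℝ → Ltwo d} {w : Ltwo d} {C : ℝ} (hC : 0 ≤ C)
    (hw : IsDualityIntegralOn d q a b V J F w) (hF : ∀ᵐ s ∂timeMeasure a b, ‖F s‖ ≤ C) :
    ‖w‖ ≤ (b - a) ^ q.toReal⁻¹ * C * ‖V‖ := by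
  obtain ⟨G, _, hG, -, hinner⟩ := hw w
  have hnorm_sq : ‖w‖ ^ 2 = V G := by
    rw [inner_self_eq_norm_sq_to_K] at hinner
    simpa [← Complex.ofReal_pow] using congrArg Complex.re hinner
  have hG_le : ∀ᵐ s ∂timeMeasure a b, ‖G s‖ ≤ ‖w‖ * C := by
    filter_upwards [hG, hF] with s hGs hFs
    by_cases hs : s ∈ J
    · simp only [Set.indicator_of_mem hs] at hGs
      exact (Lp.norm_le_of_ae_eq_re_conj_mul hGs).trans (by gcongr)
    · simp only [Set.indicator_of_notMem hs] at hGs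
      rw [Lp.norm_def, eLpNorm_congr_ae hGs, eLpNorm_zero']
      positivity
  have hG_norm : ‖G‖ ≤ (b - a) ^ q.toReal⁻¹ * (‖w‖ * C) :=
    (Lp.norm_le_of_ae_bound (by positivity) hG_le).trans_eq
      (by simp [measureUnivNNReal, Real.volume_Icc, ENNReal.coe_toNNReal_eq_toReal, hab])
  have key : ‖w‖ * ‖w‖ ≤ ‖w‖ * ((b - a) ^ q.toReal⁻¹ * C * ‖V‖) :=
    calc ‖w‖ * ‖w‖ = V G := by rw [← hnorm_sq, sq]
      _ ≤ ‖V‖ * ‖G‖ := (le_abs_self _).trans (V.le_opNorm G)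
      _ ≤ ‖V‖ * ((b - a) ^ q.toReal⁻¹ * (‖w‖ * C)) := by gcongr
      _ = ‖w‖ * ((b - a) ^ q.toReal⁻¹ * C * ‖V‖) := by ring
  rcases (norm_nonneg w).eq_or_lt with hw0 | hwpos
  · rw [← hw0]
    have : 0 ≤ b - a := sub_nonneg.mpr hab
    positivity
  · exact le_of_mul_le_mul_left key hwpos

theorem statement17_general (d : ℕ)
    (p q : ℝ≥0∞) (hpq : 1 / p + 1 / q = 1) [Fact (1 ≤ q)]
    (a b : ℝ) (hab : a ≤ b)
    (U : ℝ → (Ltwo d ≃ₗᵢ[ℂ] Ltwo d))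
    (r : ℝ)
    (f g : MeasureTheory.Lp (Ltwo d) ∞ (timeMeasure a b))
    (s : ℝ)
    (hg : MeasureTheory.MemLp (fun x : Rd d => ‖x‖ ^ r • ((g s : Rd d → ℂ) x)) 2
      (volume : MeasureTheory.Measure (Rd d)))
    (V : Mp d q a b) (w : Ltwo d)
    (hw : IsDualityIntegralOn d q a b V (Set.Icc a b) (fun s' => U (s - s') (f s')) w) :
    MeasureTheory.eLpNorm
        (fun x : Rd d => ‖x‖ ^ r •
          ((starRingEnd ℂ) ((g s : Rd d → ℂ) x) * (w : Rd d → ℂ) x)) 1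
        (volume : MeasureTheory.Measure (Rd d))
      ≤ ENNReal.ofReal ((b - a) ^ (1 - 1 / p.toReal) *
          (MeasureTheory.eLpNorm (fun x : Rd d => ‖x‖ ^ r • ((g s : Rd d → ℂ) x)) 2
            (volume : MeasureTheory.Measure (Rd d))).toReal * ‖f‖ * ‖V‖) := by
  have hexp : q.toReal⁻¹ = 1 - 1 / p.toReal := by
    have := ENNReal.toReal_inv_add_toReal_inv (by simpa only [one_div] using hpq)
    rw [one_div]
    linarith
  have hw_le : ‖w‖ ≤ (b - a) ^ (1 - 1 / p.toReal) * ‖f‖ * ‖V‖ := by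
    refine hexp ▸ hw.norm_le hab (norm_nonneg f) ?_
    filter_upwards [Lp.ae_norm_le_norm_of_top f] with s' hs'
    rwa [LinearIsometryEquiv.norm_map]
  have hweight : (fun x : Rd d => ‖x‖ ^ r • (conj ((g s : Rd d → ℂ) x) * w x))
      = fun x => conj (‖x‖ ^ r • (g s : Rd d → ℂ) x) * w x := by
    funext x
    simp only [Complex.real_smul, map_mul, Complex.conj_ofReal]
    ring
  rw [hweight]
  calc _ ≤ _ := eLpNorm_one_conj_mul_le hg.1 (Lp.aestronglyMeasurable w)
    _ = ENNReal.ofReal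
          ((eLpNorm (fun x : Rd d => ‖x‖ ^ r • (g s : Rd d → ℂ) x) 2 volume).toReal * ‖w‖) := by
        rw [ENNReal.ofReal_mul ENNReal.toReal_nonneg, ENNReal.ofReal_toReal hg.2.ne, ofReal_norm,
          Lp.enorm_def]
    _ ≤ _ := ENNReal.ofReal_le_ofReal <|
        (mul_le_mul_of_nonneg_left hw_le ENNReal.toReal_nonneg).trans_eq (by ring)

/-- Pointwise-in-time moment bound: for a.e.-defined
`(L_I(f,g)V)(s) = conj(g(s))·∫_I e^{i(s-s')Δ} f(s') V(ds')` one has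
`‖ |x|^r (L_I(f,g)V)(s,·) ‖_{L¹} ≤ |I|^{1-1/p} ‖|x|^r g(s)‖_{L²} ‖f‖_{L^∞L²} ‖V‖_{M^p}`. -/
theorem statement17 (d : ℕ) (hd : 1 ≤ d)
    (p q : ℝ≥0∞) (hp : 1 ≤ p) (hpq : 1 / p + 1 / q = 1) [Fact (1 ≤ q)]
    (a b : ℝ) (hab : a ≤ b)
    (U : ℝ → (Ltwo d ≃ₗᵢ[ℂ] Ltwo d)) (hU : IsSchrodingerGroup d U)
    (r : ℝ) (hr : 0 ≤ r)
    (f g : MeasureTheory.Lp (Ltwo d) ∞ (timeMeasure a b))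
    (s : ℝ) (hs : s ∈ Set.Icc a b)
    (hg : MeasureTheory.MemLp (fun x : Rd d => ‖x‖ ^ r • ((g s : Rd d → ℂ) x)) 2
      (volume : MeasureTheory.Measure (Rd d)))
    (V : Mp d q a b) (w : Ltwo d)
    (hw : IsDualityIntegralOn d q a b V (Set.Icc a b) (fun s' => U (s - s') (f s')) w) :
    MeasureTheory.eLpNorm
        (fun x : Rd d => ‖x‖ ^ r •
          ((starRingEnd ℂ) ((g s : Rd d → ℂ) x) * (w : Rd d → ℂ) x)) 1
        (volume : MeasureTheory.Measure (Rd d))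
      ≤ ENNReal.ofReal ((b - a) ^ (1 - 1 / p.toReal) *
          (MeasureTheory.eLpNorm (fun x : Rd d => ‖x‖ ^ r • ((g s : Rd d → ℂ) x)) 2
            (volume : MeasureTheory.Measure (Rd d))).toReal * ‖f‖ * ‖V‖) :=
  statement17_general d p q hpq a b hab U r f g s hg V w hw

end
end
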